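/- With the choices A₁ = A, B₁ = L Q Lᵀ, A₂ = −Aᵀ, A₃ = A, B₃ = B, A₄ = 0 (and C₁, D₁, C₂, B₂ arbitrary, e.g. zero) in the 4×4 block matrix Ξ, the blocks of Υ = exp(Ξ Δt) satisfy: Υ₁₁ = exp(A Δt), Υ₃₄ = ∫₀^{Δt} exp(A(Δt−s)) B ds, and Υ₁₂ Υ₁₁ᵀ = ∫₀^{Δt} exp(A(Δt−s)) L Q Lᵀ exp(Aᵀ(Δt−s)) ds. -/

import Mathlib

/-!
Write `Ξ = P + N` with `P = [[X, 0], [0, Y]]` and `N = [[0, C], [0, 0]]`. Differentiating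
`s ↦ exp((t-s)Ξ) exp(sP)` gives Duhamel's formula
`exp(tΞ) = exp(tP) + ∫₀ᵗ exp((t-s)Ξ) N exp(sP) ds`. Since `N exp(sP) N = 0`, multiplying it on
the right by `N` shows `exp(uΞ) N = exp(uP) N`, so the integrand may be replaced by
`exp((t-s)P) N exp(sP)`, whose only nonzero block is `exp((t-s)X) C exp(sY)`. For `Y = -Aᵀ`,
right multiplication by `exp(tA)ᵀ = exp(tAᵀ)` turns `exp(-sAᵀ)` into `exp((t-s)Aᵀ)`.
-/

open Matrix

open NormedSpace intervalIntegral

section Duhamel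

variable {𝔸 : Type*} [NormedRing 𝔸] [NormedAlgebra ℝ 𝔸] [CompleteSpace 𝔸]

@[fun_prop]
theorem Continuous.exp_smul_const {α : Type*} [TopologicalSpace α] {f : α → ℝ}
    (hf : Continuous f) (x : 𝔸) : Continuous fun a => exp (f a • x) :=
  (continuous_iff_continuousAt.2 fun s =>
    (hasDerivAt_exp_smul_const' (𝕂 := ℝ) x s).continuousAt).comp hf

theorem intervalIntegral.integral_mul_const_of_continuous {f : ℝ → 𝔸} (hf : Continuous f)
    (x : 𝔸) (t₀ t₁ : ℝ) : (∫ s in t₀..t₁, f s) * x = ∫ s in t₀..t₁, f s * x :=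
  (((ContinuousLinearMap.mul ℝ 𝔸).flip x).intervalIntegral_comp_comm
    (hf.intervalIntegrable t₀ t₁)).symm

theorem exp_smul_add_eq_add_integral (P N : 𝔸) (t : ℝ) :
    exp (t • (P + N)) =
      exp (t • P) + ∫ s in (0 : ℝ)..t, exp ((t - s) • (P + N)) * N * exp (s • P) := by
  have hderiv : ∀ s : ℝ, HasDerivAt (fun s : ℝ => exp ((t - s) • (P + N)) * exp (s • P))
      (-(exp ((t - s) • (P + N)) * N * exp (s • P))) s := by
    intro s
    have hE : HasDerivAt (fun s : ℝ => exp ((t - s) • (P + N)))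
        (-(exp ((t - s) • (P + N)) * (P + N))) s := by
      simpa [Function.comp_def] using (hasDerivAt_exp_smul_const (𝕂 := ℝ) (P + N) (t - s)).scomp s
        ((hasDerivAt_id s).const_sub t)
    exact (hE.mul (hasDerivAt_exp_smul_const' (𝕂 := ℝ) P s)).congr_deriv (by noncomm_ring)
  have hcont : Continuous fun s : ℝ => exp ((t - s) • (P + N)) * N * exp (s • P) := by
    fun_prop
  have hFTC :=
    integral_eq_sub_of_hasDerivAt (fun s _ => hderiv s) (hcont.neg.intervalIntegrable 0 t)
  simp only [intervalIntegral.integral_neg, sub_self, zero_smul, exp_zero, one_mul, mul_one,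
    sub_zero] at hFTC
  rw [← neg_neg (∫ _ in _.._, _), hFTC]
  abel

theorem exp_smul_add_eq_add_integral_of_mul_exp_smul_mul_eq_zero {P N : 𝔸}
    (hN : ∀ s : ℝ, N * exp (s • P) * N = 0) (t : ℝ) :
    exp (t • (P + N)) =
      exp (t • P) + ∫ s in (0 : ℝ)..t, exp ((t - s) • P) * N * exp (s • P) := by
  have hexpN : ∀ u : ℝ, exp (u • (P + N)) * N = exp (u • P) * N := by
    intro u
    rw [exp_smul_add_eq_add_integral P N u, add_mul, add_eq_left,
      integral_mul_const_of_continuous (by fun_prop)]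
    simp [mul_assoc, hN]
  rw [exp_smul_add_eq_add_integral P N t]
  simp_rw [hexpN]

end Duhamel

section Blocks

variable {a b : Type*} [Fintype a] [Fintype b]

-- The topology induced by this norm is the product topology of `Matrix` only up to unfolding,
-- which is why some Banach-algebra facts below are restated before being used.
attribute [local instance] Matrix.linftyOpNormedAddCommGroup Matrix.linftyOpNormedSpace
  Matrix.linftyOpNormedRing Matrix.linftyOpNormedAlgebra

theorem Matrix.intervalIntegral_apply {f : ℝ → Matrix a b ℝ} {t₀ t₁ : ℝ}
    (hf : Continuous f) (i : a) (j : b) :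
    (∫ s in t₀..t₁, f s) i j = ∫ s in t₀..t₁, f s i j :=
  ((entryLinearMap ℝ ℝ i j).toContinuousLinearMap.intervalIntegral_comp_comm
    (hf.intervalIntegrable t₀ t₁)).symm

theorem Matrix.intervalIntegral_fromBlocks {A : ℝ → Matrix a a ℝ} {B : ℝ → Matrix a b ℝ}
    {C : ℝ → Matrix b a ℝ} {D : ℝ → Matrix b b ℝ} (hA : Continuous A) (hB : Continuous B)
    (hC : Continuous C) (hD : Continuous D) (t₀ t₁ : ℝ) :
    ∫ s in t₀..t₁, fromBlocks (A s) (B s) (C s) (D s) =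
      fromBlocks (∫ s in t₀..t₁, A s) (∫ s in t₀..t₁, B s) (∫ s in t₀..t₁, C s)
        (∫ s in t₀..t₁, D s) := by
  have hM : Continuous fun s => fromBlocks (A s) (B s) (C s) (D s) := by fun_prop
  ext (i | i) (j | j) <;>
    simp [intervalIntegral_apply hM, intervalIntegral_apply hA, intervalIntegral_apply hB,
      intervalIntegral_apply hC, intervalIntegral_apply hD]

variable [DecidableEq a] [DecidableEq b]

theorem Matrix.exp_fromBlocks_diagonal (X : Matrix a a ℝ) (Y : Matrix b b ℝ) :
    exp (fromBlocks X 0 0 Y) = fromBlocks (exp X) 0 0 (exp Y) := by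
  let diag : Matrix a a ℝ × Matrix b b ℝ →+ Matrix (a ⊕ b) (a ⊕ b) ℝ :=
    { toFun := fun M => fromBlocks M.1 0 0 M.2
      map_zero' := by simp
      map_add' := fun M M' => by simp [fromBlocks_add] }
  have hdiag : Continuous diag :=
    continuous_fst.matrix_fromBlocks continuous_const continuous_const continuous_snd
  have hsum := ((exp_series_hasSum_exp' (𝕂 := ℝ) X).prodMk
    (exp_series_hasSum_exp' (𝕂 := ℝ) Y)).map diag hdiag
  refine (exp_series_hasSum_exp' (𝕂 := ℝ) (fromBlocks X 0 0 Y)).unique ?_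
  simp only [diag, Function.comp_def, fromBlocks_diagonal_pow, fromBlocks_smul, smul_zero] at hsum ⊢
  exact hsum

theorem Matrix.exp_smul_fromBlocks_zero₂₁ (X : Matrix a a ℝ) (C : Matrix a b ℝ)
    (Y : Matrix b b ℝ) (t : ℝ) :
    exp (t • fromBlocks X C 0 Y) =
      fromBlocks (exp (t • X)) (∫ s in (0 : ℝ)..t, exp ((t - s) • X) * C * exp (s • Y)) 0
        (exp (t • Y)) := by
  have hexp : ∀ u : ℝ, exp (u • fromBlocks X 0 0 Y) = fromBlocks (exp (u • X)) 0 0 (exp (u • Y)) :=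
    fun u => by simp only [fromBlocks_smul, smul_zero, exp_fromBlocks_diagonal]
  have hsplit : fromBlocks X C 0 Y = fromBlocks X 0 0 Y + fromBlocks 0 C 0 0 := by
    simp [fromBlocks_add]
  have hnil : ∀ s : ℝ, fromBlocks 0 C 0 0 * exp (s • fromBlocks X 0 0 Y) * fromBlocks 0 C 0 0 = 0 :=
    fun s => by simp [hexp, fromBlocks_multiply]
  have hterm : ∀ s : ℝ, exp ((t - s) • fromBlocks X 0 0 Y) * fromBlocks 0 C 0 0 *
      exp (s • fromBlocks X 0 0 Y) = fromBlocks 0 (exp ((t - s) • X) * C * exp (s • Y)) 0 0 :=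
    fun s => by simp [hexp, fromBlocks_multiply, Matrix.mul_assoc]
  have hduhamel : exp (t • fromBlocks X C 0 Y) = exp (t • fromBlocks X 0 0 Y) +
      ∫ s in (0 : ℝ)..t, exp ((t - s) • fromBlocks X 0 0 Y) * fromBlocks 0 C 0 0 *
        exp (s • fromBlocks X 0 0 Y) := by
    rw [hsplit]
    exact exp_smul_add_eq_add_integral_of_mul_exp_smul_mul_eq_zero hnil t
  rw [hduhamel, hexp]
  simp only [hterm]
  rw [intervalIntegral_fromBlocks continuous_const (by fun_prop) continuous_const continuous_const]
  simp [fromBlocks_add]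

theorem Matrix.exp_smul_mul_exp_smul (X : Matrix a a ℝ) (s t : ℝ) :
    exp (s • X) * exp (t • X) = exp ((s + t) • X) := by
  rw [← Matrix.exp_add_of_commute _ _ (((Commute.refl X).smul_left s).smul_right t), add_smul]

theorem Matrix.toBlocks₁₂_exp_smul_fromBlocks_neg_transpose_mul (X C : Matrix a a ℝ) (t : ℝ) :
    (exp (t • fromBlocks X C 0 (-Xᵀ))).toBlocks₁₂ * (exp (t • X))ᵀ =
      ∫ s in (0 : ℝ)..t, exp ((t - s) • X) * C * exp ((t - s) • Xᵀ) := by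
  rw [exp_smul_fromBlocks_zero₂₁, toBlocks_fromBlocks₁₂, ← exp_transpose, transpose_smul,
    integral_mul_const_of_continuous (by fun_prop)]
  refine integral_congr fun s _ => ?_
  simp only [Matrix.mul_assoc, smul_neg, ← neg_smul, exp_smul_mul_exp_smul, neg_add_eq_sub]

theorem vanLoan_discretization_general {n m p : ℕ} (A : Matrix (Fin n) (Fin n) ℝ)
    (B : Matrix (Fin n) (Fin p) ℝ) (L : Matrix (Fin n) (Fin m) ℝ)
    (Q : Matrix (Fin m) (Fin m) ℝ) (Δt : ℝ) :
    ∀ Υ : Matrix ((Fin n ⊕ Fin n) ⊕ (Fin n ⊕ Fin p)) ((Fin n ⊕ Fin n) ⊕ (Fin n ⊕ Fin p)) ℝ,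
      Υ = NormedSpace.exp (Δt • Matrix.fromBlocks
          (Matrix.fromBlocks A (L * Q * Lᵀ) 0 (-Aᵀ)) 0
          0 (Matrix.fromBlocks A B 0 (0 : Matrix (Fin p) (Fin p) ℝ))) →
      (fun i j => Υ (Sum.inl (Sum.inl i)) (Sum.inl (Sum.inl j))) =
        NormedSpace.exp (Δt • A) ∧
      (fun i j => Υ (Sum.inr (Sum.inl i)) (Sum.inr (Sum.inr j))) =
        (fun i j => ∫ s in (0:ℝ)..Δt, (NormedSpace.exp ((Δt - s) • A) * B) i j :
          Matrix (Fin n) (Fin p) ℝ) ∧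
      (Matrix.of fun i j => Υ (Sum.inl (Sum.inl i)) (Sum.inl (Sum.inr j))) *
          (NormedSpace.exp (Δt • A))ᵀ =
        (fun i j => ∫ s in (0:ℝ)..Δt,
          (NormedSpace.exp ((Δt - s) • A) * (L * Q * Lᵀ) *
            NormedSpace.exp ((Δt - s) • Aᵀ)) i j) := by
  intro Υ hΥ
  rw [fromBlocks_smul, smul_zero, smul_zero, exp_fromBlocks_diagonal] at hΥ
  subst hΥ
  refine ⟨?_, ?_, ?_⟩
  · ext i j
    simp [exp_smul_fromBlocks_zero₂₁]
  · ext i j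
    simp only [exp_smul_fromBlocks_zero₂₁, smul_zero, exp_zero, Matrix.mul_one,
      fromBlocks_apply₂₂, fromBlocks_apply₁₂]
    exact intervalIntegral_apply (by fun_prop) i j
  · change (exp (Δt • fromBlocks A (L * Q * Lᵀ) 0 (-Aᵀ))).toBlocks₁₂ * _ = _
    rw [toBlocks₁₂_exp_smul_fromBlocks_neg_transpose_mul]
    ext i j
    exact intervalIntegral_apply (by fun_prop) i j

/-- With `Ξ = [[A, LQLᵀ, 0, 0], [0, −Aᵀ, 0, 0], [0, 0, A, B], [0, 0, 0, 0]]` and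
`Υ = exp(Ξ Δt)`, the discrete-time matrices are obtained as `Υ₁₁ = exp(A Δt)`,
`Υ₃₄ = ∫₀^{Δt} exp(A(Δt−s)) B ds`, and
`Υ₁₂ Υ₁₁ᵀ = ∫₀^{Δt} exp(A(Δt−s)) L Q Lᵀ exp(Aᵀ(Δt−s)) ds`. -/
theorem vanLoan_discretization {n m p : ℕ} (A : Matrix (Fin n) (Fin n) ℝ)
    (B : Matrix (Fin n) (Fin p) ℝ) (L : Matrix (Fin n) (Fin m) ℝ)
    (Q : Matrix (Fin m) (Fin m) ℝ) (Δt : ℝ) (hΔt : 0 ≤ Δt) :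
    ∀ Υ : Matrix ((Fin n ⊕ Fin n) ⊕ (Fin n ⊕ Fin p)) ((Fin n ⊕ Fin n) ⊕ (Fin n ⊕ Fin p)) ℝ,
      Υ = NormedSpace.exp (Δt • Matrix.fromBlocks
          (Matrix.fromBlocks A (L * Q * Lᵀ) 0 (-Aᵀ)) 0
          0 (Matrix.fromBlocks A B 0 (0 : Matrix (Fin p) (Fin p) ℝ))) →
      (fun i j => Υ (Sum.inl (Sum.inl i)) (Sum.inl (Sum.inl j))) =
        NormedSpace.exp (Δt • A) ∧
      (fun i j => Υ (Sum.inr (Sum.inl i)) (Sum.inr (Sum.inr j))) =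
        (fun i j => ∫ s in (0:ℝ)..Δt, (NormedSpace.exp ((Δt - s) • A) * B) i j :
          Matrix (Fin n) (Fin p) ℝ) ∧
      (Matrix.of fun i j => Υ (Sum.inl (Sum.inl i)) (Sum.inl (Sum.inr j))) *
          (NormedSpace.exp (Δt • A))ᵀ =
        (fun i j => ∫ s in (0:ℝ)..Δt,
          (NormedSpace.exp ((Δt - s) • A) * (L * Q * Lᵀ) *
            NormedSpace.exp ((Δt - s) • Aᵀ)) i j) :=
  vanLoan_discretization_general A B L Q Δt

end Blocks
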